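/- Let X, A be random variables on a probability space, and let g(X) = P(A = a | X) viewed as a function of X (the propensity score for a fixed treatment level a, with A discrete). Then conditional on g(X), the treatment indicator 1{A=a} is independent of X; i.e., P(A = a | X, g(X)) = P(A = a | g(X)) = g(X) almost surely. -/
import Mathlib

open MeasureTheory ProbabilityTheory

/-- The propensity score `g(X) = P(A = a | X)` is a balancing score:
conditional on `g(X)`, the treatment indicator `1{A = a}` is independent of `X`, i.e.
`P(A = a | X, g(X)) = P(A = a | g(X)) = g(X)` almost surely.  Here `G` is a version of
the conditional probability `P(A = a | X)` (the conditional expectation of the indicator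
of `{A = a}` given `σ(X)`), `A` is discrete, and the claim is that conditioning on the
σ-algebra generated by `(X, G)` or by `G` alone both yield `G` almost surely. -/
theorem propensity_score_is_balancing
    {Ω 𝒳 α : Type*} [m : MeasurableSpace Ω] [MeasurableSpace 𝒳]
    [MeasurableSpace α] [MeasurableSingletonClass α] [Countable α]
    (μ : Measure Ω) [IsProbabilityMeasure μ]
    (X : Ω → 𝒳) (hX : Measurable X) (A : Ω → α) (hA : Measurable A) (a : α)
    (G : Ω → ℝ)
    (hG : G =ᵐ[μ] μ[({ω | A ω = a}.indicator fun _ => (1 : ℝ)) |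
          MeasurableSpace.comap X inferInstance])
    (hGX : MeasurableSpace.comap G inferInstance ≤ MeasurableSpace.comap X inferInstance) :
    (μ[({ω | A ω = a}.indicator fun _ => (1 : ℝ)) |
        MeasurableSpace.comap (fun ω => (X ω, G ω)) inferInstance] =ᵐ[μ] G)
    ∧ (μ[({ω | A ω = a}.indicator fun _ => (1 : ℝ)) |
        MeasurableSpace.comap G inferInstance] =ᵐ[μ] G) := by
  set mX := MeasurableSpace.comap X inferInstance with hmXdef
  set mG := MeasurableSpace.comap G inferInstance with hmGdef
  have hmX : mX ≤ m := hX.comap_le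
  have hmG : mG ≤ m := hGX.trans hmX
  have hGmeas : @Measurable Ω ℝ mG _ G := measurable_iff_comap_le.mpr le_rfl
  have hGint : Integrable G μ := (integrable_condExp).congr hG.symm
  have hGcond : μ[G | mG] =ᵐ[μ] G :=
    Filter.EventuallyEq.of_eq
      (condExp_of_stronglyMeasurable hmG hGmeas.stronglyMeasurable hGint)
  have hpair : MeasurableSpace.comap (fun ω => (X ω, G ω))
      (inferInstance : MeasurableSpace (𝒳 × ℝ)) = mX := by
    show MeasurableSpace.comap _ (MeasurableSpace.comap Prod.fst _ ⊔
      MeasurableSpace.comap Prod.snd _) = mX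
    rw [MeasurableSpace.comap_sup, MeasurableSpace.comap_comp,
      MeasurableSpace.comap_comp]
    simp only [Function.comp_def]
    exact sup_eq_left.mpr hGX
  constructor
  · rw [hpair]; exact hG.symm
  · calc μ[({ω | A ω = a}.indicator fun _ => (1 : ℝ)) | mG]
        =ᵐ[μ] μ[μ[({ω | A ω = a}.indicator fun _ => (1 : ℝ)) | mX] | mG] :=
          (condExp_condExp_of_le hGX hmX).symm
      _ =ᵐ[μ] μ[G | mG] := condExp_congr_ae hG.symm
      _ =ᵐ[μ] G := hGcond
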